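/- arXiv:2004.08332 — 4 statements merged into one kernel-verified Lean document; each statement's English description precedes it below -/
import Mathlib

section
/- Let L be an N×N complex matrix with Schur decomposition L = S T S*, where S is unitary and T is upper triangular with diagonal entries λ₁, …, λ_N (the eigenvalues of L). Then for any n×n complex matrix H and scalar c, det(I_{nN} + (I_N ⊗ H)·(c(L ⊗ I_n))) = ∏_{p=1}^{N} det(I_n + c·λ_p·H). -/
/-!
Conjugating by the unitary `S ⊗ I_n` turns `I + c (L ⊗ H)` into `I + c (T ⊗ H)`. Ordering the
index set `Fin N × Fin n` by its first coordinate, the latter is block upper triangular with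
diagonal blocks `I + c λ_p H`, so its determinant is the product of theirs.
-/

open Matrix
open scoped Kronecker

namespace Matrix

variable {R m n ι : Type*} [CommRing R]

theorem BlockTriangular.kronecker [Preorder ι] {A : Matrix m m R} {b : m → ι}
    (hA : A.BlockTriangular b) (B : Matrix n n R) :
    (A ⊗ₖ B).BlockTriangular (b ∘ Prod.fst) := fun i j hij => by
  rw [kronecker_apply, hA hij, zero_mul]

variable [Fintype m] [Fintype n] [DecidableEq n]

theorem mul_mul_kronecker (P A Q : Matrix m m R) (B : Matrix n n R) :
    (P * A * Q) ⊗ₖ B = (P ⊗ₖ (1 : Matrix n n R)) * (A ⊗ₖ B) * (Q ⊗ₖ (1 : Matrix n n R)) := by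
  rw [← mul_kronecker_mul, ← mul_kronecker_mul, mul_one, one_mul]

variable [DecidableEq m]

theorem one_kronecker_mul_kronecker_one (A : Matrix m m R) (B : Matrix n n R) :
    ((1 : Matrix m m R) ⊗ₖ B) * (A ⊗ₖ (1 : Matrix n n R)) = A ⊗ₖ B := by
  rw [← mul_kronecker_mul, one_mul, mul_one]

theorem mul_kronecker_one_of_mul_eq_one {P Q : Matrix m m R} (hPQ : P * Q = 1) :
    (P ⊗ₖ (1 : Matrix n n R)) * (Q ⊗ₖ (1 : Matrix n n R)) = 1 := by
  rw [← mul_kronecker_mul, hPQ, one_mul, one_kronecker_one]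

theorem det_one_add_conj_of_mul_eq_one {P Q : Matrix m m R} (hPQ : P * Q = 1) (hQP : Q * P = 1)
    (A : Matrix m m R) : det (1 + P * A * Q) = det (1 + A) := by
  have h : 1 + P * A * Q = P * (1 + A) * Q := by rw [mul_add, add_mul, mul_one, hPQ]
  rw [h, det_conj_of_mul_eq_one hPQ hQP]

theorem BlockTriangular.det_eq_prod_fst [LinearOrder m] {M : Matrix (m × n) (m × n) R}
    (hM : M.BlockTriangular Prod.fst) :
    M.det = ∏ p : m, (M.submatrix (Prod.mk p) (Prod.mk p)).det := by
  rw [hM.det_fintype]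
  refine Finset.prod_congr rfl fun p _ => ?_
  let e : n ≃ {a : m × n // a.1 = p} :=
    { toFun := fun i => ⟨(p, i), rfl⟩
      invFun := fun a => a.1.2
      left_inv := fun _ => rfl
      right_inv := fun a => Subtype.ext (Prod.ext a.2.symm rfl) }
  rw [← det_submatrix_equiv_self e]
  rfl

theorem det_one_add_kronecker_of_blockTriangular [LinearOrder m] {T : Matrix m m R}
    (hT : T.BlockTriangular id) (B : Matrix n n R) :
    det (1 + T ⊗ₖ B) = ∏ p : m, det (1 + T p p • B) := by
  have hblock : (1 + T ⊗ₖ B).BlockTriangular Prod.fst :=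
    blockTriangular_one.add (hT.kronecker B)
  rw [hblock.det_eq_prod_fst]
  refine Finset.prod_congr rfl fun p _ => congrArg det ?_
  ext i j
  simp [one_apply]

end Matrix

/-- Schur-decomposition based determinant factorization for the multi-agent
loop transfer function: `det(I + (I_N ⊗ H)·(c (L ⊗ I_n))) = ∏ₚ det(I + c λₚ H)`,
where the `λₚ = T p p` are the diagonal entries of the upper-triangular Schur factor. -/
theorem stmt0 (N n : ℕ) (L S T : Matrix (Fin N) (Fin N) ℂ)
    (hS : S ∈ Matrix.unitaryGroup (Fin N) ℂ)
    (hT : T.BlockTriangular (id : Fin N → Fin N))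
    (hSchur : L = S * T * Sᴴ)
    (H : Matrix (Fin n) (Fin n) ℂ) (c : ℂ) :
    ((1 : Matrix (Fin N × Fin n) (Fin N × Fin n) ℂ) +
        ((1 : Matrix (Fin N) (Fin N) ℂ) ⊗ₖ H) *
          (c • (L ⊗ₖ (1 : Matrix (Fin n) (Fin n) ℂ)))).det
      = ∏ p : Fin N, ((1 : Matrix (Fin n) (Fin n) ℂ) + (c * T p p) • H).det := by
  have hSS' : S * Sᴴ = 1 := mem_unitaryGroup_iff.mp hS
  have hS'S : Sᴴ * S = 1 := mem_unitaryGroup_iff'.mp hS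
  have hcT : (c • T).BlockTriangular id := fun i j hij => by simp [hT hij]
  rw [mul_smul_comm, one_kronecker_mul_kronecker_one, hSchur, mul_mul_kronecker,
    ← smul_mul_assoc, ← mul_smul_comm, ← smul_kronecker,
    det_one_add_conj_of_mul_eq_one (mul_kronecker_one_of_mul_eq_one hSS')
      (mul_kronecker_one_of_mul_eq_one hS'S),
    det_one_add_kronecker_of_blockTriangular hcT]
  simp only [Matrix.smul_apply, smul_eq_mul]
end

section
/- Let G be an n×n complex matrix whose largest singular value satisfies σ̄(G) ≥ 1 and whose smallest singular value satisfies σ_min(G) ≤ 1. Then there exists a unit vector z ∈ ℂⁿ with ‖G·z‖ = 1, and consequently there exists a unitary matrix Δ such that det(I + G·Δ) = 0. -/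
/-!
The map `z ↦ ‖G z‖` is continuous on the unit sphere of `ℂⁿ`, which is compact and, having real
dimension `2n ≥ 2`, connected; its image is therefore the whole interval `[σ_min(G), σ̄(G)]`,
which contains `1`. Given a unit vector `z` with `‖G z‖ = 1`, the vector `v = -G z` is also a unit
vector, so some unitary `Δ` sends `v` to `z`, and then `(1 + G Δ) v = v + G z = 0`.
-/

open Matrix Metric

theorem one_lt_rank_real_of_complex (E : Type*) [AddCommGroup E] [Module ℂ E] [Nontrivial E] :
    1 < Module.rank ℝ E := by
  have h : 1 ≤ Module.rank ℂ E := Cardinal.one_le_iff_pos.mpr rank_pos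
  rw [rank_real_of_complex]
  calc (1 : Cardinal) < 2 := Cardinal.one_lt_two
    _ = 2 * 1 := (mul_one 2).symm
    _ ≤ 2 * Module.rank ℂ E := by gcongr

theorem IsCompact.mem_image_of_sInf_le_of_le_sSup {α : Type*} [TopologicalSpace α] {K : Set α}
    {f : α → ℝ} {c : ℝ} (hK : IsCompact K) (hKconn : IsConnected K) (hf : ContinuousOn f K)
    (hinf : sInf (f '' K) ≤ c) (hsup : c ≤ sSup (f '' K)) : c ∈ f '' K := by
  have hfK : IsCompact (f '' K) := hK.image_of_continuousOn hf
  have hne : (f '' K).Nonempty := hKconn.nonempty.image f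
  exact (hKconn.image f hf).isPreconnected.ordConnected.out (hfK.sInf_mem hne) (hfK.sSup_mem hne)
    ⟨hinf, hsup⟩

section

variable {𝕜 E : Type*} [RCLike 𝕜] [NormedAddCommGroup E] [InnerProductSpace 𝕜 E]
  [FiniteDimensional 𝕜 E]

theorem exists_orthonormalBasis_apply_eq {v : E} (hv : ‖v‖ = 1) (i : Fin (Module.finrank 𝕜 E)) :
    ∃ b : OrthonormalBasis (Fin (Module.finrank 𝕜 E)) 𝕜 E, b i = v := by
  have hsingle : Orthonormal 𝕜 (({i} : Set _).domRestrict fun _ ↦ v) :=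
    orthonormal_subsingleton_iff.mpr fun _ ↦ hv
  obtain ⟨b, hb⟩ := hsingle.exists_orthonormalBasis_extension_of_card_eq (Fintype.card_fin _).symm
  exact ⟨b, hb i rfl⟩

theorem exists_linearIsometryEquiv_apply_eq {v z : E} (hv : ‖v‖ = 1) (hz : ‖z‖ = 1) :
    ∃ e : E ≃ₗᵢ[𝕜] E, e v = z := by
  have hpos : 0 < Module.finrank 𝕜 E :=
    Module.finrank_pos_iff_exists_ne_zero.mpr ⟨v, norm_ne_zero_iff.mp (by simp [hv])⟩
  obtain ⟨b, hb⟩ := exists_orthonormalBasis_apply_eq (𝕜 := 𝕜) hv ⟨0, hpos⟩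
  obtain ⟨c, hc⟩ := exists_orthonormalBasis_apply_eq (𝕜 := 𝕜) hz ⟨0, hpos⟩
  refine ⟨b.equiv c (.refl _), ?_⟩
  rw [← hb, ← hc, OrthonormalBasis.equiv_apply_basis, Equiv.refl_apply]

end

namespace Matrix

variable {𝕜 n : Type*} [RCLike 𝕜] [Fintype n] [DecidableEq n]

theorem toEuclideanCLM_symm_mem_unitaryGroup
    (e : EuclideanSpace 𝕜 n ≃ₗᵢ[𝕜] EuclideanSpace 𝕜 n) :
    (toEuclideanCLM (n := n) (𝕜 := 𝕜)).symm (e : EuclideanSpace 𝕜 n →L[𝕜] EuclideanSpace 𝕜 n) ∈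
      unitaryGroup n 𝕜 :=
  Unitary.map_mem _ (Unitary.linearIsometryEquiv.symm e).prop

theorem exists_mem_unitaryGroup_det_one_add_mul_eq_zero (G : Matrix n n 𝕜)
    {z : EuclideanSpace 𝕜 n} (hz : ‖z‖ = 1) (hGz : ‖toEuclideanLin G z‖ = 1) :
    ∃ Δ ∈ unitaryGroup n 𝕜, (1 + G * Δ).det = 0 := by
  set v := -toEuclideanLin G z
  have hv : ‖v‖ = 1 := by rw [norm_neg, hGz]
  obtain ⟨e, he⟩ := exists_linearIsometryEquiv_apply_eq (𝕜 := 𝕜) hv hz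
  refine ⟨_, toEuclideanCLM_symm_mem_unitaryGroup e, ?_⟩
  rw [← exists_mulVec_eq_zero_iff]
  refine ⟨WithLp.ofLp v, ?_, ?_⟩
  · rw [Ne, WithLp.ofLp_eq_zero, ← norm_eq_zero, hv]
    exact one_ne_zero
  · have hΔ : (toEuclideanCLM (n := n) (𝕜 := 𝕜)).symm e *ᵥ WithLp.ofLp v = WithLp.ofLp z := by
      rw [← ofLp_toEuclideanCLM, StarAlgEquiv.apply_symm_apply]
      exact congrArg WithLp.ofLp he
    rw [add_mulVec, one_mulVec, ← mulVec_mulVec, hΔ]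
    change WithLp.ofLp v + WithLp.ofLp (toEuclideanLin G z) = 0
    rw [← WithLp.ofLp_add, neg_add_cancel, WithLp.ofLp_zero]

end Matrix

/-- If the largest singular value of `G` is `≥ 1` and the smallest is `≤ 1`
(characterized as sup/inf of `‖Gz‖` over unit vectors `z`), then there is a unit
vector `z` with `‖Gz‖ = 1`, and consequently a unitary `Δ` with `det(I + GΔ) = 0`. -/
theorem stmt3 (n : ℕ) (hn : 0 < n) (G : Matrix (Fin n) (Fin n) ℂ)
    (hmax : 1 ≤ sSup {r : ℝ | ∃ z : EuclideanSpace ℂ (Fin n), ‖z‖ = 1 ∧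
        r = ‖Matrix.toEuclideanLin G z‖})
    (hmin : sInf {r : ℝ | ∃ z : EuclideanSpace ℂ (Fin n), ‖z‖ = 1 ∧
        r = ‖Matrix.toEuclideanLin G z‖} ≤ 1) :
    (∃ z : EuclideanSpace ℂ (Fin n), ‖z‖ = 1 ∧ ‖Matrix.toEuclideanLin G z‖ = 1) ∧
    ∃ Δ ∈ Matrix.unitaryGroup (Fin n) ℂ, (1 + G * Δ).det = 0 := by
  set f := fun z : EuclideanSpace ℂ (Fin n) ↦ ‖toEuclideanLin G z‖
  have hS : {r : ℝ | ∃ z : EuclideanSpace ℂ (Fin n), ‖z‖ = 1 ∧ r = f z} = f '' sphere 0 1 := by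
    ext; simp [eq_comm]
  rw [hS] at hmax hmin
  have : Nonempty (Fin n) := ⟨⟨0, hn⟩⟩
  have hconn : IsConnected (sphere (0 : EuclideanSpace ℂ (Fin n)) 1) :=
    isConnected_sphere (one_lt_rank_real_of_complex _) 0 zero_le_one
  obtain ⟨z, hz, hGz⟩ := (isCompact_sphere 0 1).mem_image_of_sInf_le_of_le_sSup hconn
    (by fun_prop) hmin hmax
  rw [mem_sphere_zero_iff_norm] at hz
  exact ⟨⟨z, hz, hGz⟩, G.exists_mem_unitaryGroup_det_one_add_mul_eq_zero hz hGz⟩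
end

section
/- Let v, z ∈ ℂⁿ be nonzero vectors with v*z real and positive. Then there exists a positive definite Hermitian matrix R with R·v = z. -/
/-!
Take `R = P + c⁻¹ z z*`, where `c = v*z > 0` and `P` is the orthogonal projection onto `v⊥`.
Then `R v = c⁻¹ (z* v) z = z`. Both summands are positive semidefinite, and a vector killed by
both is a multiple of `v` orthogonal to `z`, hence zero because `z* v = c ≠ 0`; so `R` is
positive definite.
-/

open Matrix
open scoped ComplexOrder

namespace Matrix

variable {𝕜 ι : Type*} [RCLike 𝕜] [Fintype ι]

theorem PosSemidef.posDef_add_of_mulVec_eq_zero {A B : Matrix ι ι 𝕜} (hA : A.PosSemidef)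
    (hB : B.PosSemidef) (hker : ∀ x, A *ᵥ x = 0 → B *ᵥ x = 0 → x = 0) : (A + B).PosDef := by
  refine .of_dotProduct_mulVec_pos (hA.isHermitian.add hB.isHermitian) fun x hx => ?_
  have hA₀ := hA.dotProduct_mulVec_nonneg x
  have hB₀ := hB.dotProduct_mulVec_nonneg x
  rw [add_mulVec, dotProduct_add]
  refine (add_nonneg hA₀ hB₀).lt_of_ne' fun h => hx (hker x ?_ ?_)
  · exact (hA.dotProduct_mulVec_zero_iff x).1 ((add_eq_zero_iff_of_nonneg hA₀ hB₀).1 h).1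
  · exact (hB.dotProduct_mulVec_zero_iff x).1 ((add_eq_zero_iff_of_nonneg hA₀ hB₀).1 h).2

theorem PosSemidef.of_isHermitian_of_mul_self_eq {P : Matrix ι ι 𝕜} (hP : P.IsHermitian)
    (hPP : P * P = P) : P.PosSemidef := by
  simpa [hP.eq, hPP] using posSemidef_conjTranspose_mul_self P

variable [DecidableEq ι]

/-- The orthogonal projection onto the orthogonal complement of `v` (the identity if `v = 0`). -/
noncomputable def projOrth (v : ι → 𝕜) : Matrix ι ι 𝕜 :=
  1 - (star v ⬝ᵥ v)⁻¹ • vecMulVec v (star v)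

theorem projOrth_mulVec (v x : ι → 𝕜) :
    projOrth v *ᵥ x = x - ((star v ⬝ᵥ v)⁻¹ * (star v ⬝ᵥ x)) • v := by
  simp [projOrth, sub_mulVec, smul_mulVec, vecMulVec_mulVec, smul_smul]

theorem projOrth_mulVec_self (v : ι → 𝕜) : projOrth v *ᵥ v = 0 := by
  rcases eq_or_ne v 0 with rfl | hv
  · simp
  · rw [projOrth_mulVec, inv_mul_cancel₀ (dotProduct_star_self_pos_iff.2 hv).ne', one_smul,
      sub_self]

theorem isHermitian_projOrth (v : ι → 𝕜) : (projOrth v).IsHermitian := by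
  have hb : starRingEnd 𝕜 (star v ⬝ᵥ v) = star v ⬝ᵥ v := (star_dotProduct v v).symm
  simp [projOrth, IsHermitian, conjTranspose_sub, conjTranspose_smul, conjTranspose_vecMulVec, hb]

theorem projOrth_mul_self (v : ι → 𝕜) : projOrth v * projOrth v = projOrth v := by
  have hb : (star v ⬝ᵥ v)⁻¹ * (star v ⬝ᵥ v)⁻¹ * (star v ⬝ᵥ v) = (star v ⬝ᵥ v)⁻¹ := by
    simpa using mul_self_mul_inv (star v ⬝ᵥ v)⁻¹
  simp only [projOrth, sub_mul, mul_sub, one_mul, mul_one, smul_mul_smul,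
    vecMulVec_mul_vecMulVec, vecMulVec_smul, smul_smul, hb]
  abel

theorem posSemidef_projOrth (v : ι → 𝕜) : (projOrth v).PosSemidef :=
  .of_isHermitian_of_mul_self_eq (isHermitian_projOrth v) (projOrth_mul_self v)

theorem exists_posDef_mulVec_eq {v z : ι → 𝕜} (hvz : 0 < star v ⬝ᵥ z) :
    ∃ R : Matrix ι ι 𝕜, R.PosDef ∧ R *ᵥ v = z := by
  set c := star v ⬝ᵥ z
  have hzv : star z ⬝ᵥ v = c := by
    rw [star_dotProduct, (IsSelfAdjoint.of_nonneg hvz.le).star_eq]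
  have hz : z ≠ 0 := by rintro rfl; simp [c] at hvz
  have hrankOne : (c⁻¹ • vecMulVec z (star z)).PosSemidef :=
    (posSemidef_vecMulVec_self_star z).smul (inv_pos.2 hvz).le
  refine ⟨projOrth v + c⁻¹ • vecMulVec z (star z), ?_, ?_⟩
  · refine (posSemidef_projOrth v).posDef_add_of_mulVec_eq_zero hrankOne fun x hPx hzx => ?_
    set t := (star v ⬝ᵥ v)⁻¹ * (star v ⬝ᵥ x)
    have hx : x = t • v := sub_eq_zero.1 (projOrth_mulVec v x ▸ hPx)
    have hzx' : star z ⬝ᵥ x = 0 := by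
      simpa [smul_mulVec, vecMulVec_mulVec, hz, hvz.ne'] using hzx
    have ht : t = 0 := by simpa [hx, hzv, hvz.ne'] using hzx'
    rw [hx, ht, zero_smul]
  · simp [add_mulVec, projOrth_mulVec_self, smul_mulVec, vecMulVec_mulVec, hzv, smul_smul,
      inv_mul_cancel₀ hvz.ne']

end Matrix

/-- If `v, z ∈ ℂⁿ` have `v*z` real and positive, there exists a positive definite
Hermitian matrix `R` with `Rv = z`. -/
theorem stmt8 (n : ℕ) (v z : EuclideanSpace ℂ (Fin n))
    (him : (inner ℂ v z : ℂ).im = 0) (hre : 0 < (inner ℂ v z : ℂ).re) :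
    ∃ R : Matrix (Fin n) (Fin n) ℂ, R.PosDef ∧ Matrix.toEuclideanLin R v = z := by
  have hvz : 0 < star v.ofLp ⬝ᵥ z.ofLp := by
    rw [dotProduct_comm, ← EuclideanSpace.inner_eq_star_dotProduct, Complex.lt_def]
    exact ⟨hre, him.symm⟩
  obtain ⟨R, hR, hRv⟩ := exists_posDef_mulVec_eq hvz
  exact ⟨R, hR, by rw [toLpLin_apply, hRv]⟩
end

section
/- Let v, z ∈ ℂⁿ with v*z real and positive, and let R be a positive definite Hermitian matrix with Rv = z. If the eigenvalues of R all lie in [e^{−g}, e^{g}] for g ≥ 0, then (v*v + z*z)/(2 v*z) ≤ cosh(g). Equivalently, the minimal gain g of a positive definite Hermitian matrix mapping v to z satisfies cosh(g) ≥ (‖v‖² + ‖z‖²)/(2 v*z). -/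
/-!
Every eigenvalue `λ` of `R` satisfies `(e^g - λ)(λ - e^{-g}) ≥ 0`, i.e. `1 + λ² ≤ 2 cosh g · λ`.
By the functional calculus the matrix `(e^g - R)(R - e^{-g}) = 2 cosh g · R - 1 - R²` is therefore
positive semidefinite, and evaluating its quadratic form at `v` gives
`v*v + z*z ≤ 2 cosh g · v*z`, since `v*R²v = ‖Rv‖² = z*z` and `v*Rv = v*z`.
-/

open Matrix Set
open scoped ComplexOrder MatrixOrder

theorem IsSelfAdjoint.mul_sub_algebraMap_nonneg_of_spectrum_subset_Icc {A : Type*} [Ring A]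
    [StarRing A] [Algebra ℝ A] [PartialOrder A] [StarOrderedRing A] [TopologicalSpace A]
    [ContinuousFunctionalCalculus ℝ A IsSelfAdjoint] [NonnegSpectrumClass ℝ A]
    {a : A} (ha : IsSelfAdjoint a) {lo hi : ℝ} (h : spectrum ℝ a ⊆ Icc lo hi) :
    0 ≤ (algebraMap ℝ A hi - a) * (a - algebraMap ℝ A lo) := by
  have hcfc : cfc (fun x => (hi - x) * (x - lo)) a
      = (algebraMap ℝ A hi - a) * (a - algebraMap ℝ A lo) := by
    rw [cfc_mul .., cfc_sub .., cfc_sub .., cfc_const .., cfc_const .., cfc_id' ..]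
  rw [← hcfc]
  exact cfc_nonneg fun x hx => mul_nonneg (sub_nonneg.2 (h hx).2) (sub_nonneg.2 (h hx).1)

theorem Matrix.IsHermitian.re_dotProduct_le_of_eigenvalues_mem_Icc {𝕜 n : Type*} [RCLike 𝕜]
    [Fintype n] [DecidableEq n] {R : Matrix n n 𝕜} (hR : R.IsHermitian) {lo hi : ℝ}
    (heig : ∀ i, hR.eigenvalues i ∈ Icc lo hi) (v : n → 𝕜) :
    lo * hi * RCLike.re (star v ⬝ᵥ v) + RCLike.re (star (R *ᵥ v) ⬝ᵥ R *ᵥ v)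
      ≤ (lo + hi) * RCLike.re (star v ⬝ᵥ R *ᵥ v) := by
  have hM := (hR.isSelfAdjoint.mul_sub_algebraMap_nonneg_of_spectrum_subset_Icc
    (hR.spectrum_real_eq_range_eigenvalues ▸ range_subset_iff.2 heig)).posSemidef
  have hRR : star v ⬝ᵥ R *ᵥ R *ᵥ v = star (R *ᵥ v) ⬝ᵥ R *ᵥ v := by
    rw [dotProduct_mulVec, star_mulVec, hR.eq]
  have := (RCLike.nonneg_iff.1 (hM.dotProduct_mulVec_nonneg v)).1
  simp only [Algebra.algebraMap_eq_smul_one, sub_mul, mul_sub, smul_mul_assoc, one_mul,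
    mul_smul_comm, mul_one, sub_mulVec, smul_mulVec, one_mulVec, ← mulVec_mulVec,
    dotProduct_sub, dotProduct_smul, hRR, map_sub, RCLike.smul_re] at this
  linarith

theorem stmt18_general (n : ℕ) (v z : Fin n → ℂ) (g : ℝ)
    (hre : 0 < (star v ⬝ᵥ z).re)
    (R : Matrix (Fin n) (Fin n) ℂ) (hR : R.PosDef)
    (hmap : R.mulVec v = z)
    (heig : ∀ i, hR.1.eigenvalues i ∈ Set.Icc (Real.exp (-g)) (Real.exp g)) :
    ((star v ⬝ᵥ v).re + (star z ⬝ᵥ z).re) / (2 * (star v ⬝ᵥ z).re) ≤ Real.cosh g := by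
  have key := hR.1.re_dotProduct_le_of_eigenvalues_mem_Icc heig v
  rw [hmap, ← Real.exp_add, neg_add_cancel, Real.exp_zero, one_mul] at key
  rw [div_le_iff₀ (by positivity), Real.cosh_eq]
  exact key.trans_eq (by simp only [RCLike.re_to_complex]; ring)

/-- Gain-margin bound: if `v*z` is real and positive, `R` is positive definite
Hermitian with `Rv = z`, and all eigenvalues of `R` lie in `[e^{−g}, e^{g}]`
(`g ≥ 0`), then `(‖v‖² + ‖z‖²)/(2 v*z) ≤ cosh g`. -/
theorem stmt18 (n : ℕ) (v z : Fin n → ℂ) (g : ℝ) (hg : 0 ≤ g)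
    (him : (star v ⬝ᵥ z).im = 0) (hre : 0 < (star v ⬝ᵥ z).re)
    (R : Matrix (Fin n) (Fin n) ℂ) (hR : R.PosDef)
    (hmap : R.mulVec v = z)
    (heig : ∀ i, hR.1.eigenvalues i ∈ Set.Icc (Real.exp (-g)) (Real.exp g)) :
    ((star v ⬝ᵥ v).re + (star z ⬝ᵥ z).re) / (2 * (star v ⬝ᵥ z).re) ≤ Real.cosh g :=
  stmt18_general n v z g hre R hR hmap heig
end
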